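/- arXiv:2503.06221 — 6 statements merged into one kernel-verified Lean document; each statement's English description precedes it below -/
import Mathlib

section
/- Let F be an algebraically closed field and let A = (α, b; c, δ) be a split octonion with α ≠ δ and ⟨b, c⟩ = 0. Then for every nonzero α₁ ∈ F and every positive integer k₁, there exists a split octonion X such that A = α₁ · X^{k₁}. -/
/-- Zorn vector matrices: the split octonion algebra over `F`. -/
structure Oct (F : Type*) where
  a : F              -- upper-left scalar η
  b : Fin 3 → F      -- upper-right vector x
  c : Fin 3 → F      -- lower-left vector y
  d : F              -- lower-right scalar ζ

namespace Oct

variable {F : Type*} [Field F]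

/-- standard bilinear form on F^3 -/
def dot (x y : Fin 3 → F) : F := x 0 * y 0 + x 1 * y 1 + x 2 * y 2

/-- cross product on F^3, satisfying ⟨x ∧ y, z⟩ = det(x,y,z) -/
def cross (x y : Fin 3 → F) : Fin 3 → F :=
  ![x 1 * y 2 - x 2 * y 1, x 2 * y 0 - x 0 * y 2, x 0 * y 1 - x 1 * y 0]

instance : Add (Oct F) :=
  ⟨fun A B => ⟨A.a + B.a, A.b + B.b, A.c + B.c, A.d + B.d⟩⟩

instance : Mul (Oct F) :=
  ⟨fun A B =>
    ⟨A.a * B.a + dot A.b B.c,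
     A.a • B.b + B.d • A.b + cross A.c B.c,
     A.d • B.c + B.a • A.c + cross A.b B.b,
     A.d * B.d + dot A.c B.b⟩⟩

instance : SMul F (Oct F) :=
  ⟨fun t A => ⟨t * A.a, t • A.b, t • A.c, t * A.d⟩⟩

instance : One (Oct F) := ⟨⟨1, 0, 0, 1⟩⟩

/-- powers, via A^{n+1} = A · A^n (well-defined by power-associativity) -/
def pow (A : Oct F) : ℕ → Oct F
  | 0 => 1
  | n + 1 => A * pow A n

/-- octonion conjugation -/
def conj (A : Oct F) : Oct F := ⟨A.d, -A.b, -A.c, A.a⟩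

/-- the norm form -/
def norm (A : Oct F) : F := A.a * A.d - dot A.b A.c

end Oct

open Oct

lemma pow_diag {F : Type*} [Field F] (η ζ : F) (x y : Fin 3 → F)
    (hxy : dot x y = 0) (hyx : dot y x = 0)
    (p : ℕ → F) (hp0 : p 0 = 0)
    (hpη : ∀ n, p (n + 1) = η * p n + ζ ^ n)
    (hpζ : ∀ n, p (n + 1) = ζ * p n + η ^ n) :
    ∀ n, pow (⟨η, x, y, ζ⟩ : Oct F) n = ⟨η ^ n, p n • x, p n • y, ζ ^ n⟩ := by
  intro n
  induction n with
  | zero =>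
    show (1 : Oct F) = _
    show (⟨1, 0, 0, 1⟩ : Oct F) = _
    simp [hp0]
  | succ n ih =>
    show (⟨η, x, y, ζ⟩ : Oct F) * pow _ n = _
    rw [ih]
    show (⟨_, _, _, _⟩ : Oct F) = _
    refine Oct.mk.injEq .. ▸ ⟨?_, ?_, ?_, ?_⟩
    · have : dot x (p n • y) = p n * dot x y := by
        simp [dot]; ring
      rw [this, hxy]; ring
    · funext i
      fin_cases i <;>
        simp [cross, hpη n, Pi.smul_apply, smul_eq_mul] <;> ring
    · funext i
      fin_cases i <;>
        simp [cross, hpζ n, Pi.smul_apply, smul_eq_mul] <;> ring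
    · have : dot y (p n • x) = p n * dot y x := by
        simp [dot]; ring
      rw [this, hyx]; ring

theorem stmt_1 {F : Type*} [Field F] [IsAlgClosed F] (A : Oct F)
    (hAd : A.a ≠ A.d) (horth : dot A.b A.c = 0)
    (α₁ : F) (hα₁ : α₁ ≠ 0) (k₁ : ℕ) (hk₁ : 1 ≤ k₁) :
    ∃ X : Oct F, A = α₁ • pow X k₁ := by
  obtain ⟨η, hη⟩ := IsAlgClosed.exists_pow_nat_eq (A.a / α₁) (n := k₁) hk₁
  obtain ⟨ζ, hζ⟩ := IsAlgClosed.exists_pow_nat_eq (A.d / α₁) (n := k₁) hk₁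
  have hpowne : η ^ k₁ ≠ ζ ^ k₁ := by
    rw [hη, hζ]
    exact fun h => hAd (by field_simp at h; exact h)
  have hηζ : η - ζ ≠ 0 := by
    intro h
    exact hpowne (by rw [sub_eq_zero] at h; rw [h])
  set p : ℕ → F := fun n => (η ^ n - ζ ^ n) / (η - ζ) with hp
  have hp0 : p 0 = 0 := by simp [hp]
  have hpη : ∀ n, p (n + 1) = η * p n + ζ ^ n := by
    intro n; simp only [hp]; field_simp; ring
  have hpζ : ∀ n, p (n + 1) = ζ * p n + η ^ n := by
    intro n; simp only [hp]; field_simp; ring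
  have hpk : p k₁ ≠ 0 := by
    simp only [hp]
    exact div_ne_zero (sub_ne_zero.2 hpowne) hηζ
  set t : F := (α₁ * p k₁)⁻¹ with ht
  have htt : α₁ * p k₁ ≠ 0 := mul_ne_zero hα₁ hpk
  have hcb : dot A.c A.b = 0 := by
    unfold dot at horth ⊢; linear_combination horth
  have hxy : dot (t • A.b) (t • A.c) = 0 := by
    have : dot (t • A.b) (t • A.c) = t * t * dot A.b A.c := by
      simp [dot]; ring
    rw [this, horth, mul_zero]
  have hyx : dot (t • A.c) (t • A.b) = 0 := by
    have : dot (t • A.c) (t • A.b) = t * t * dot A.c A.b := by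
      simp [dot]; ring
    rw [this, hcb, mul_zero]
  refine ⟨⟨η, t • A.b, t • A.c, ζ⟩, ?_⟩
  rw [pow_diag η ζ _ _ hxy hyx p hp0 hpη hpζ k₁]
  show A = (⟨_, _, _, _⟩ : Oct F)
  have hscal : ∀ v : Fin 3 → F, α₁ • (p k₁ • (t • v)) = v := by
    intro v
    rw [smul_smul, smul_smul, ht, mul_inv_cancel₀ htt, one_smul]
  obtain ⟨a, b, c, d⟩ := A
  refine Oct.mk.injEq .. ▸ ⟨?_, ?_, ?_, ?_⟩
  · rw [hη]; field_simp
  · exact (hscal b).symm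
  · exact (hscal c).symm
  · rw [hζ]; field_simp
end

section
/- Let F be an algebraically closed field and α₁ ∈ F nonzero. For any split octonion of the form (α, b; 0, 0) (i.e., with zero lower-left vector and zero lower-right scalar) and any positive integer k, there exists X ∈ O(F) such that (α, b; 0, 0) = (α₁, 0; 0, 0)·X^k. -/
open Oct

namespace Oct

variable {F : Type*} [Field F]

lemma mul_def (A B : Oct F) :
    A * B = ⟨A.a * B.a + dot A.b B.c,
     A.a • B.b + B.d • A.b + cross A.c B.c,
     A.d • B.c + B.a • A.c + cross A.b B.b,
     A.d * B.d + dot A.c B.b⟩ := rfl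

@[simp]
lemma dot_zero_right (x : Fin 3 → F) : dot x 0 = 0 := by
  simp [dot]

@[simp]
lemma dot_zero_left (x : Fin 3 → F) : dot 0 x = 0 := by
  simp [dot]

@[simp]
lemma cross_zero_left (x : Fin 3 → F) : cross 0 x = 0 := by
  ext i
  fin_cases i <;> simp [cross]

@[simp]
lemma cross_smul_right_self (x : Fin 3 → F) (t : F) : cross x (t • x) = 0 := by
  ext i
  fin_cases i <;> simp [cross] <;> ring

lemma pow_mk_zero (l : F) (v : Fin 3 → F) (d : F) (n : ℕ) :
    pow ⟨l, v, 0, d⟩ n = ⟨l ^ n, (∑ i ∈ Finset.range n, d ^ i * l ^ (n - 1 - i)) • v, 0, d ^ n⟩ := by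
  induction n with
  | zero => show (⟨1, 0, 0, 1⟩ : Oct F) = _; simp
  | succ n ih =>
    rw [pow, ih, mul_def]
    congr 1
    · simp [pow_succ']
    · simp [geom_sum₂_succ_eq, add_smul, smul_smul, add_comm]
    · simp
    · simp [pow_succ']

lemma mk_mul_mk_zero (α β e : F) (w : Fin 3 → F) :
    (⟨α, 0, 0, 0⟩ : Oct F) * ⟨β, w, 0, e⟩ = ⟨α * β, α • w, 0, 0⟩ := by
  rw [mul_def]
  congr 1 <;> simp

lemma exists_pow_eq_mk_zero [IsAlgClosed F] (β : F) (w : Fin 3 → F) {k : ℕ} (hk : k ≠ 0) :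
    ∃ (e : F) (X : Oct F), pow X k = ⟨β, w, 0, e⟩ := by
  obtain ⟨l, hl⟩ := IsAlgClosed.exists_pow_nat_eq β (Nat.pos_of_ne_zero hk)
  obtain ⟨n, rfl⟩ := Nat.exists_eq_succ_of_ne_zero hk
  by_cases hl0 : l = 0
  · refine ⟨1, ⟨0, w, 0, 1⟩, ?_⟩
    rw [pow_mk_zero, geom_sum₂_comm, geom_sum₂_with_one]
    simp [← hl, hl0, Finset.sum_range_succ']
  · refine ⟨0, ⟨l, (l ^ n)⁻¹ • w, 0, 0⟩, ?_⟩
    rw [pow_mk_zero]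
    simp [hl, Finset.sum_range_succ', smul_smul, hl0]

end Oct

theorem stmt_5 {F : Type*} [Field F] [IsAlgClosed F] (α₁ : F) (hα₁ : α₁ ≠ 0)
    (α : F) (b : Fin 3 → F) (k : ℕ) (hk : 1 ≤ k) :
    ∃ X : Oct F, (⟨α, b, 0, 0⟩ : Oct F) = (⟨α₁, 0, 0, 0⟩ : Oct F) * pow X k := by
  obtain ⟨e, X, hX⟩ := exists_pow_eq_mk_zero (α₁⁻¹ * α) (α₁⁻¹ • b) (Nat.one_le_iff_ne_zero.mp hk)
  refine ⟨X, ?_⟩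
  rw [hX, mk_mul_mk_zero, smul_smul, mul_inv_cancel_left₀ hα₁, mul_inv_cancel₀ hα₁, one_smul]
end

section
/- Let F be an algebraically closed field, α₁ ∈ F nonzero, β₁ ∈ F, and e₁ = (1,0,0), e₂ = (0,1,0). For any integers k₁, k₂ ≥ 2, every element of the form (α₁, 0; 0, 0)·X^{k₁} + (β₁, e₁; e₂, 0)·Y^{k₂} with X, Y ∈ O(F) has lower-left vector with vanishing first coordinate; hence the map (X,Y) ↦ (α₁,0;0,0)X^{k₁} + (β₁,e₁;e₂,0)Y^{k₂} is not surjective on O(F). -/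
open Oct
theorem stmt_10 {F : Type*} [Field F] [IsAlgClosed F] (α₁ β₁ : F) (hα₁ : α₁ ≠ 0)
    (k₁ k₂ : ℕ) (hk₁ : 2 ≤ k₁) (hk₂ : 2 ≤ k₂) :
    (∀ X Y : Oct F,
        ((⟨α₁, 0, 0, 0⟩ : Oct F) * pow X k₁
          + (⟨β₁, ![1, 0, 0], ![0, 1, 0], 0⟩ : Oct F) * pow Y k₂).c 0 = 0)
    ∧ ¬ Function.Surjective (fun p : Oct F × Oct F =>
        (⟨α₁, 0, 0, 0⟩ : Oct F) * pow p.1 k₁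
          + (⟨β₁, ![1, 0, 0], ![0, 1, 0], 0⟩ : Oct F) * pow p.2 k₂) := by
  have key : ∀ X Y : Oct F,
      ((⟨α₁, 0, 0, 0⟩ : Oct F) * pow X k₁
        + (⟨β₁, ![1, 0, 0], ![0, 1, 0], 0⟩ : Oct F) * pow Y k₂).c 0 = 0 := by
    intro X Y
    show (((⟨α₁, 0, 0, 0⟩ : Oct F) * pow X k₁).c
        + ((⟨β₁, ![1, 0, 0], ![0, 1, 0], 0⟩ : Oct F) * pow Y k₂).c) 0 = 0
    show ((0:F) • (pow X k₁).c + (pow X k₁).a • (0 : Fin 3 → F)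
        + cross (0 : Fin 3 → F) (pow X k₁).b
        + ((0:F) • (pow Y k₂).c + (pow Y k₂).a • ![(0:F),1,0]
        + cross ![(1:F),0,0] (pow Y k₂).b)) 0 = 0
    simp [cross]
  refine ⟨key, fun hs => ?_⟩
  obtain ⟨p, hp⟩ := hs ⟨0, 0, ![1, 0, 0], 0⟩
  have := key p.1 p.2
  simp only at hp
  rw [hp] at this
  simp at this
end

section
/- Let F be an algebraically closed field, α₁ ∈ F nonzero, β₁ ∈ F, and e₁ = (1,0,0). For any integers k₁, k₂ ≥ 2, every element of the form (α₁, 0; 0, 0)·X^{k₁} + (β₁, e₁; 0, 0)·Y^{k₂} with X, Y ∈ O(F) has lower-right scalar entry equal to 0; hence the map is not surjective on O(F). -/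
open Oct
theorem stmt_11 {F : Type*} [Field F] [IsAlgClosed F] (α₁ β₁ : F) (hα₁ : α₁ ≠ 0)
    (k₁ k₂ : ℕ) (hk₁ : 2 ≤ k₁) (hk₂ : 2 ≤ k₂) :
    (∀ X Y : Oct F,
        ((⟨α₁, 0, 0, 0⟩ : Oct F) * pow X k₁
          + (⟨β₁, ![1, 0, 0], 0, 0⟩ : Oct F) * pow Y k₂).d = 0)
    ∧ ¬ Function.Surjective (fun p : Oct F × Oct F =>
        (⟨α₁, 0, 0, 0⟩ : Oct F) * pow p.1 k₁
          + (⟨β₁, ![1, 0, 0], 0, 0⟩ : Oct F) * pow p.2 k₂) := by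
  have key : ∀ X Y : Oct F,
      ((⟨α₁, 0, 0, 0⟩ : Oct F) * pow X k₁
        + (⟨β₁, ![1, 0, 0], 0, 0⟩ : Oct F) * pow Y k₂).d = 0 := by
    intro X Y
    show (0 * (pow X k₁).d + dot (0 : Fin 3 → F) (pow X k₁).b)
      + (0 * (pow Y k₂).d + dot (0 : Fin 3 → F) (pow Y k₂).b) = 0
    simp [dot]
  refine ⟨key, fun hs => ?_⟩
  obtain ⟨p, hp⟩ := hs (⟨0, 0, 0, 1⟩ : Oct F)
  have := key p.1 p.2
  simp only [] at hp
  rw [hp] at this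
  exact one_ne_zero this
end

section
/- Let F be an algebraically closed field, α₈, β₈ ∈ F with α₈ ≠ 0, and e₁ = (1,0,0). For any integers k₁, k₂ ≥ 2, every element of the form (0, 0; 0, α₈)·X^{k₁} + (0, e₁; 0, β₈)·Y^{k₂} with X, Y ∈ O(F) has upper-right vector with vanishing second and third coordinates; hence the map is not surjective on O(F). -/
open Oct
theorem stmt_12 {F : Type*} [Field F] [IsAlgClosed F] (α₈ β₈ : F) (hα₈ : α₈ ≠ 0)
    (k₁ k₂ : ℕ) (hk₁ : 2 ≤ k₁) (hk₂ : 2 ≤ k₂) :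
    (∀ X Y : Oct F,
        ((⟨0, 0, 0, α₈⟩ : Oct F) * pow X k₁
          + (⟨0, ![1, 0, 0], 0, β₈⟩ : Oct F) * pow Y k₂).b 1 = 0
      ∧ ((⟨0, 0, 0, α₈⟩ : Oct F) * pow X k₁
          + (⟨0, ![1, 0, 0], 0, β₈⟩ : Oct F) * pow Y k₂).b 2 = 0)
    ∧ ¬ Function.Surjective (fun p : Oct F × Oct F =>
        (⟨0, 0, 0, α₈⟩ : Oct F) * pow p.1 k₁
          + (⟨0, ![1, 0, 0], 0, β₈⟩ : Oct F) * pow p.2 k₂) := by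

  have key : ∀ X Y : Oct F, ∀ i : Fin 3, i ≠ 0 →
      ((⟨0, 0, 0, α₈⟩ : Oct F) * pow X k₁
        + (⟨0, ![1, 0, 0], 0, β₈⟩ : Oct F) * pow Y k₂).b i = 0 := by
    intro X Y i hi
    show (((0 : F) • (pow X k₁).b + (pow X k₁).d • (0 : Fin 3 → F)
        + cross 0 (pow X k₁).c : Fin 3 → F)
      + ((0 : F) • (pow Y k₂).b + (pow Y k₂).d • ![1, 0, 0]
        + cross 0 (pow Y k₂).c : Fin 3 → F)) i = 0
    fin_cases i
    · exact absurd rfl hi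
    · simp [cross]
    · simp [cross]
  refine ⟨fun X Y => ⟨key X Y 1 (by decide), key X Y 2 (by decide)⟩, ?_⟩
  intro hs
  obtain ⟨⟨X, Y⟩, hXY⟩ := hs (⟨0, ![0, 1, 0], 0, 0⟩ : Oct F)
  have hXY' : (⟨0, 0, 0, α₈⟩ : Oct F) * pow X k₁
      + (⟨0, ![1, 0, 0], 0, β₈⟩ : Oct F) * pow Y k₂
      = (⟨0, ![0, 1, 0], 0, 0⟩ : Oct F) := hXY
  have := key X Y 1 (by decide)
  rw [hXY'] at this
  simp at this
end

section
/- Let F be an algebraically closed field, e₁ = (1,0,0) ∈ F^3, and N = (0, e₁; 0, 0) ∈ O(F). For a split octonion A and a positive integer k₁, the equation A = N·X^{k₁} has a solution X ∈ O(F) if and only if A has the form (α, (b₁,0,0); (0,c₂,c₃), 0) for some α, b₁, c₂, c₃ ∈ F. -/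
/-!
Left multiplication by `N` sends `Y` to `(Y.c 0, (Y.d, 0, 0); (0, -Y.b 2, Y.b 1), 0)`, so we need a
power `X ^ k` with four prescribed entries. If `(α, c₂, c₃) ≠ 0` an idempotent
`X = (1 - d, x; y, d)` works: it is its own power, and its norm condition `⟨x, y⟩ = (1 - d) d` is a
nontrivial linear equation in the remaining entries of `x` and `y`. Otherwise take
`X = s • (0, 0; 0, 1)` with `s ^ k = b₁`, which exists because `F` is algebraically closed.
-/

namespace Oct

@[ext]
lemma ext {F : Type*} {A B : Oct F} (ha : A.a = B.a) (hb : A.b = B.b) (hc : A.c = B.c)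
    (hd : A.d = B.d) : A = B := by
  cases A; cases B; congr

variable {F : Type*} [Field F]

@[simp] lemma mul_a (A B : Oct F) : (A * B).a = A.a * B.a + dot A.b B.c := rfl
@[simp] lemma mul_b (A B : Oct F) : (A * B).b = A.a • B.b + B.d • A.b + cross A.c B.c := rfl
@[simp] lemma mul_c (A B : Oct F) : (A * B).c = A.d • B.c + B.a • A.c + cross A.b B.b := rfl
@[simp] lemma mul_d (A B : Oct F) : (A * B).d = A.d * B.d + dot A.c B.b := rfl
@[simp] lemma smul_a (t : F) (A : Oct F) : (t • A).a = t * A.a := rfl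
@[simp] lemma smul_b (t : F) (A : Oct F) : (t • A).b = t • A.b := rfl
@[simp] lemma smul_c (t : F) (A : Oct F) : (t • A).c = t • A.c := rfl
@[simp] lemma smul_d (t : F) (A : Oct F) : (t • A).d = t * A.d := rfl
@[simp] lemma one_a : (1 : Oct F).a = 1 := rfl
@[simp] lemma one_b : (1 : Oct F).b = 0 := rfl
@[simp] lemma one_c : (1 : Oct F).c = 0 := rfl
@[simp] lemma one_d : (1 : Oct F).d = 1 := rfl

lemma dot_single (v : Fin 3 → F) (i : Fin 3) (x : F) : dot v (Pi.single i x) = v i * x := by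
  fin_cases i <;> simp [dot]

lemma exists_dot_eq {v : Fin 3 → F} (hv : v ≠ 0) (r : F) : ∃ w, dot v w = r := by
  obtain ⟨i, hi⟩ := Function.ne_iff.mp hv
  exact ⟨Pi.single i (r / v i), by rw [dot_single, mul_div_cancel₀ _ hi]⟩

lemma cross_self (x : Fin 3 → F) : cross x x = 0 := by
  funext i; fin_cases i <;> simp [cross, mul_comm]

lemma smul_mul_smul (s t : F) (A B : Oct F) : (s • A) * (t • B) = (s * t) • (A * B) := by
  ext i <;> try fin_cases i
  all_goals simp [dot, cross, Matrix.vecHead, Matrix.vecTail]; ring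

lemma mul_one (A : Oct F) : A * 1 = A := by
  ext i <;> try fin_cases i
  all_goals simp [dot, cross]

lemma pow_smul (t : F) (A : Oct F) (k : ℕ) : pow (t • A) k = t ^ k • pow A k := by
  induction k with
  | zero => ext <;> simp [pow]
  | succ k ih =>
    rw [pow, pow, ih, smul_mul_smul, pow_succ']

lemma pow_eq_self_of_isIdempotentElem {E : Oct F} (hE : IsIdempotentElem E) {k : ℕ}
    (hk : 1 ≤ k) : pow E k = E := by
  induction k, hk using Nat.le_induction with
  | base => exact mul_one E
  | succ k _ ih => rw [pow, ih, hE.eq]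

lemma isIdempotentElem_mk {a d : F} {b c : Fin 3 → F} (htr : a + d = 1)
    (hnorm : dot b c = a * d) : IsIdempotentElem (⟨a, b, c, d⟩ : Oct F) := by
  have hdot : dot c b = a * d := by rw [← hnorm]; simp only [dot]; ring
  ext i
  · simp only [mul_a, hnorm]; linear_combination a * htr
  · simp only [mul_b, cross_self, Pi.add_apply, Pi.smul_apply, smul_eq_mul, Pi.zero_apply]
    linear_combination b i * htr
  · simp only [mul_c, cross_self, Pi.add_apply, Pi.smul_apply, smul_eq_mul, Pi.zero_apply]
    linear_combination c i * htr
  · simp only [mul_d, hdot]; linear_combination d * htr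

lemma mk_zero_e₁_mul (Y : Oct F) :
    (⟨0, ![1, 0, 0], 0, 0⟩ : Oct F) * Y
      = ⟨Y.c 0, ![Y.d, 0, 0], ![0, -Y.b 2, Y.b 1], 0⟩ := by
  ext i <;> try fin_cases i
  all_goals simp [dot, cross]

end Oct

open Oct
theorem stmt_13 {F : Type*} [Field F] [IsAlgClosed F] (A : Oct F)
    (k₁ : ℕ) (hk₁ : 1 ≤ k₁) :
    (∃ X : Oct F, A = (⟨0, ![1, 0, 0], 0, 0⟩ : Oct F) * pow X k₁)
      ↔ ∃ α b₁ c₂ c₃ : F, A = (⟨α, ![b₁, 0, 0], ![0, c₂, c₃], 0⟩ : Oct F) := by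
  constructor
  · rintro ⟨X, rfl⟩
    exact ⟨_, _, _, _, mk_zero_e₁_mul _⟩
  rintro ⟨α, b₁, c₂, c₃, rfl⟩
  by_cases hv : ![α, c₃, -c₂] = 0
  · obtain ⟨rfl, rfl, rfl⟩ : α = 0 ∧ c₃ = 0 ∧ c₂ = 0 := by
      simpa [funext_iff, Fin.forall_fin_succ] using hv
    obtain ⟨s, hs⟩ := IsAlgClosed.exists_pow_nat_eq b₁ hk₁
    have hE : IsIdempotentElem (⟨0, 0, 0, 1⟩ : Oct F) :=
      isIdempotentElem_mk (by ring) (by simp [dot])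
    refine ⟨s • ⟨0, 0, 0, 1⟩, ?_⟩
    rw [pow_smul, pow_eq_self_of_isIdempotentElem hE hk₁, mk_zero_e₁_mul, hs]
    simp
  · obtain ⟨w, hw⟩ := exists_dot_eq hv ((1 - b₁) * b₁)
    let E : Oct F := ⟨1 - b₁, ![w 0, c₃, -c₂], ![α, w 1, w 2], b₁⟩
    have hE : IsIdempotentElem E :=
      isIdempotentElem_mk (by ring) (by rw [← hw]; simp [dot]; ring)
    refine ⟨E, ?_⟩
    rw [pow_eq_self_of_isIdempotentElem hE hk₁, mk_zero_e₁_mul]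
    simp [E]
end
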